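/- Let f : ℝ^{n×p} → ℝ be differentiable, let X ∈ ℝ^{n×p} satisfy ‖XᵀX − I_p‖_F ≤ 1/6, and suppose ‖∇f(X)‖_F ≤ M for some constant M > 0. Then |⟨G(X), X(XᵀX − I_p)⟩| ≤ (7/4)·M·‖XᵀX − I_p‖_F². -/

import Mathlib

open Matrix BigOperators Finset Kronecker

/- Equip matrix spaces with the Frobenius norm (finite-dimensional, so the resulting calculus
notions such as `fderiv`/`Differentiable` are norm-independent). -/
attribute [local instance] Matrix.frobeniusNormedAddCommGroup Matrix.frobeniusNormedSpace

/-- The Frobenius norm of a real matrix. -/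
noncomputable def frob {m k : Type*} [Fintype m] [Fintype k] (A : Matrix m k ℝ) : ℝ :=
  Real.sqrt (∑ i, ∑ j, (A i j) ^ 2)

/-- The trace inner product ⟨A, B⟩ = tr(AᵀB) of real matrices. -/
noncomputable def minner {m k : Type*} [Fintype m] [Fintype k] (A B : Matrix m k ℝ) : ℝ :=
  (Aᵀ * B).trace

/-- The symmetric part sym(B) = (B + Bᵀ)/2 of a square matrix. -/
noncomputable def symPart {k : Type*} (B : Matrix k k ℝ) : Matrix k k ℝ :=
  (1 / 2 : ℝ) • (B + Bᵀ)

/-- The generalized Riemannian gradient G(X) = ∇f(X)((3/2)I - (1/2)XᵀX) - X·sym(Xᵀ∇f(X)),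
expressed in terms of the Euclidean gradient matrix `Gf = ∇f(X)`. -/
noncomputable def Gdir {n p : ℕ} (Gf X : Matrix (Fin n) (Fin p) ℝ) :
    Matrix (Fin n) (Fin p) ℝ :=
  Gf * ((3 / 2 : ℝ) • (1 : Matrix (Fin p) (Fin p) ℝ) - (1 / 2 : ℝ) • (Xᵀ * X))
    - X * symPart (Xᵀ * Gf)

/-- The feasibility direction E(X) = X(XᵀX - I). -/
noncomputable def Edir {n p : ℕ} (X : Matrix (Fin n) (Fin p) ℝ) :
    Matrix (Fin n) (Fin p) ℝ :=
  X * (Xᵀ * X - 1)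

/-- The spectral norm (largest singular value) of a real matrix, as the operator norm of the
associated Euclidean linear map. -/
noncomputable def specNorm {m k : Type*} [Fintype m] [Fintype k] [DecidableEq k]
    (A : Matrix m k ℝ) : ℝ :=
  ‖LinearMap.toContinuousLinearMap (Matrix.toEuclideanLin A)‖

/-- The smallest singular value of a real matrix: the square root of the smallest eigenvalue
of AᵀA (= AᴴA over ℝ). -/
noncomputable def sigmaMin {m k : Type*} [Fintype m] [Fintype k] [DecidableEq m] [DecidableEq k]
    (A : Matrix m k ℝ) : ℝ :=
  Real.sqrt (⨅ i, (Matrix.isHermitian_conjTranspose_mul_self A).eigenvalues i)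
/-!
Write `E = XᵀX - I`, a symmetric matrix. Moving factors across the trace inner product,
`⟨∇f·P, XE⟩ = ⟨∇f, XEP⟩` for the symmetric `P = (3/2)I - (1/2)XᵀX`, and
`⟨X·sym(Xᵀ∇f), XE⟩ = ⟨Xᵀ∇f, XᵀX E⟩ = ⟨∇f, X·XᵀX E⟩` because `XᵀX E` is symmetric; the two terms
combine to `⟨G(X), XE⟩ = -(3/2)⟨∇f, XE²⟩`. Cauchy–Schwarz bounds this by `(3/2) M ‖XE‖ ‖E‖`,
and `‖XE‖² = tr E³ + tr E² ≤ (1 + ‖E‖)‖E‖² ≤ (7/6)²‖E‖²` once `‖E‖ ≤ 1/6`.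
-/
section Frobenius

variable {m k l : Type*} [Fintype m] [Fintype k] [Fintype l]

lemma minner_eq_sum (A B : Matrix m k ℝ) : minner A B = ∑ x : m × k, A x.1 x.2 * B x.1 x.2 := by
  simp only [minner, Matrix.trace, Matrix.diag, Matrix.mul_apply, Matrix.transpose_apply,
    Fintype.sum_prod_type]
  exact Finset.sum_comm

lemma frob_eq_sqrt_sum (A : Matrix m k ℝ) : frob A = √(∑ x : m × k, A x.1 x.2 ^ 2) := by
  rw [frob, Fintype.sum_prod_type]

lemma frob_nonneg (A : Matrix m k ℝ) : 0 ≤ frob A := Real.sqrt_nonneg _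

lemma frob_eq_norm (A : Matrix m k ℝ) : frob A = ‖A‖ := by
  simp [Matrix.frobenius_norm_def, frob, Real.sqrt_eq_rpow]

lemma frob_mul_le (A : Matrix m k ℝ) (B : Matrix k l ℝ) : frob (A * B) ≤ frob A * frob B := by
  simpa only [frob_eq_norm] using Matrix.frobenius_norm_mul A B

lemma minner_self (A : Matrix m k ℝ) : minner A A = frob A ^ 2 := by
  rw [minner_eq_sum, frob_eq_sqrt_sum, Real.sq_sqrt (by positivity)]
  simp only [sq]

lemma minner_le_frob_mul_frob (A B : Matrix m k ℝ) : minner A B ≤ frob A * frob B := by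
  simpa only [minner_eq_sum, frob_eq_sqrt_sum] using Real.sum_mul_le_sqrt_mul_sqrt _ _ _

lemma abs_minner_le (A B : Matrix m k ℝ) : |minner A B| ≤ frob A * frob B := by
  refine abs_le.2 ⟨?_, minner_le_frob_mul_frob A B⟩
  have h := minner_le_frob_mul_frob (-A) B
  simp only [minner_eq_sum, frob_eq_sqrt_sum, Matrix.neg_apply, neg_mul, neg_sq,
    Finset.sum_neg_distrib] at h ⊢
  linarith

lemma minner_mul_left (A : Matrix m k ℝ) (B : Matrix k l ℝ) (C : Matrix m l ℝ) :
    minner (A * B) C = minner B (Aᵀ * C) := by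
  simp only [minner, Matrix.transpose_mul, Matrix.mul_assoc]

lemma minner_mul_right (A : Matrix m k ℝ) (B : Matrix k l ℝ) (C : Matrix m l ℝ) :
    minner (A * B) C = minner A (C * Bᵀ) := by
  rw [minner, minner, Matrix.transpose_mul, Matrix.mul_assoc, Matrix.trace_mul_comm,
    Matrix.mul_assoc]

lemma minner_sub_left (A B C : Matrix m k ℝ) : minner (A - B) C = minner A C - minner B C := by
  simp only [minner, Matrix.transpose_sub, Matrix.sub_mul, Matrix.trace_sub]

lemma minner_add_right (A B C : Matrix m k ℝ) : minner A (B + C) = minner A B + minner A C := by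
  simp only [minner, Matrix.mul_add, Matrix.trace_add]

lemma minner_sub_right (A B C : Matrix m k ℝ) : minner A (B - C) = minner A B - minner A C := by
  simp only [minner, Matrix.mul_sub, Matrix.trace_sub]

lemma minner_smul_right (c : ℝ) (A B : Matrix m k ℝ) : minner A (c • B) = c * minner A B := by
  simp only [minner, Matrix.mul_smul, Matrix.trace_smul, smul_eq_mul]

lemma minner_transpose_left_of_isSymm (C : Matrix k k ℝ) {S : Matrix k k ℝ} (hS : S.IsSymm) :
    minner Cᵀ S = minner C S := by
  rw [minner, minner, Matrix.transpose_transpose, ← Matrix.trace_transpose, Matrix.transpose_mul,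
    hS.eq, Matrix.trace_mul_comm]

lemma minner_symPart_of_isSymm (C : Matrix k k ℝ) {S : Matrix k k ℝ} (hS : S.IsSymm) :
    minner (symPart C) S = minner C S := by
  have hCt := minner_transpose_left_of_isSymm C hS
  simp only [symPart, minner, Matrix.transpose_smul, Matrix.transpose_add,
    Matrix.transpose_transpose, Matrix.smul_mul, Matrix.add_mul, Matrix.trace_smul,
    Matrix.trace_add, smul_eq_mul] at hCt ⊢
  linarith

end Frobenius

lemma minner_Gdir_Edir {n p : ℕ} (Gf X : Matrix (Fin n) (Fin p) ℝ) :
    minner (Gdir Gf X) (Edir X) = -(3 / 2) * minner Gf (Edir X * (Xᵀ * X - 1)) := by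
  have hS : (Xᵀ * X).IsSymm := by
    rw [Matrix.IsSymm, Matrix.transpose_mul, Matrix.transpose_transpose]
  have hPt : ((3 / 2 : ℝ) • (1 : Matrix (Fin p) (Fin p) ℝ) - (1 / 2 : ℝ) • (Xᵀ * X))ᵀ =
      (3 / 2 : ℝ) • 1 - (1 / 2 : ℝ) • (Xᵀ * X) := by
    rw [Matrix.transpose_sub, Matrix.transpose_smul, Matrix.transpose_smul, Matrix.transpose_one,
      hS.eq]
  have hSE : (Xᵀ * X * (Xᵀ * X - 1)).IsSymm := by
    rw [Matrix.IsSymm, Matrix.transpose_mul, hS.eq, Matrix.transpose_sub, hS.eq,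
      Matrix.transpose_one, Matrix.mul_sub, Matrix.sub_mul, Matrix.mul_one, Matrix.one_mul]
  have hsym :
      minner (X * symPart (Xᵀ * Gf)) (Edir X) = minner Gf (X * (Xᵀ * X * (Xᵀ * X - 1))) := by
    rw [minner_mul_left, Edir, ← Matrix.mul_assoc, minner_symPart_of_isSymm _ hSE, minner_mul_left,
      Matrix.transpose_transpose]
  rw [Gdir, minner_sub_left, minner_mul_right, hPt, hsym, ← minner_sub_right, ← minner_smul_right]
  congr 1
  simp only [Edir, Matrix.mul_sub, Matrix.sub_mul, Matrix.mul_smul,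
    Matrix.mul_one, Matrix.mul_assoc]
  module

section Feasibility

variable {m k : Type*} [Fintype m] [Fintype k] [DecidableEq k]

lemma frob_mul_gram_sub_one_sq_le (X : Matrix m k ℝ) :
    frob (X * (Xᵀ * X - 1)) ^ 2 ≤ (1 + frob (Xᵀ * X - 1)) * frob (Xᵀ * X - 1) ^ 2 := by
  set E := Xᵀ * X - 1 with hE
  have hXX : Xᵀ * X = E + 1 := by rw [hE, sub_add_cancel]
  have hcube : minner E (E * E) ≤ frob E ^ 3 :=
    calc minner E (E * E) ≤ frob E * frob (E * E) := minner_le_frob_mul_frob E (E * E)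
      _ ≤ frob E * (frob E * frob E) := by gcongr; exacts [frob_nonneg E, frob_mul_le E E]
      _ = frob E ^ 3 := by ring
  calc frob (X * E) ^ 2 = minner E (E * E) + minner E E := by
        rw [← minner_self, minner_mul_left, ← Matrix.mul_assoc, hXX, Matrix.add_mul,
          Matrix.one_mul, minner_add_right]
    _ ≤ frob E ^ 3 + frob E ^ 2 := by rw [minner_self]; linarith
    _ = (1 + frob E) * frob E ^ 2 := by ring

lemma frob_mul_gram_sub_one_le (X : Matrix m k ℝ) (hX : frob (Xᵀ * X - 1) ≤ 1 / 6) :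
    frob (X * (Xᵀ * X - 1)) ≤ 7 / 6 * frob (Xᵀ * X - 1) := by
  refine (pow_le_pow_iff_left₀ (frob_nonneg _)
    (mul_nonneg (by norm_num) (frob_nonneg _)) two_ne_zero).1 ?_
  calc frob (X * (Xᵀ * X - 1)) ^ 2 ≤ (1 + frob (Xᵀ * X - 1)) * frob (Xᵀ * X - 1) ^ 2 :=
        frob_mul_gram_sub_one_sq_le X
    _ ≤ (7 / 6) ^ 2 * frob (Xᵀ * X - 1) ^ 2 := by gcongr; linarith
    _ = (7 / 6 * frob (Xᵀ * X - 1)) ^ 2 := by ring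

end Feasibility

theorem stmt4_general {n p : ℕ}
    (gradf : Matrix (Fin n) (Fin p) ℝ → Matrix (Fin n) (Fin p) ℝ)
    (X : Matrix (Fin n) (Fin p) ℝ) (hX : frob (Xᵀ * X - 1) ≤ 1 / 6)
    (M : ℝ) (hbound : frob (gradf X) ≤ M) :
    |minner (Gdir (gradf X) X) (X * (Xᵀ * X - 1))|
      ≤ 7 / 4 * M * frob (Xᵀ * X - 1) ^ 2 := by
  have hEdir : frob (Edir X) ≤ 7 / 6 * frob (Xᵀ * X - 1) := frob_mul_gram_sub_one_le X hX
  have hM : 0 ≤ M := (frob_nonneg _).trans hbound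
  change |minner (Gdir (gradf X) X) (Edir X)| ≤ _
  calc |minner (Gdir (gradf X) X) (Edir X)|
      = 3 / 2 * |minner (gradf X) (Edir X * (Xᵀ * X - 1))| := by
        rw [minner_Gdir_Edir, abs_mul]; norm_num
    _ ≤ 3 / 2 * (frob (gradf X) * (frob (Edir X) * frob (Xᵀ * X - 1))) := by
        gcongr
        exact (abs_minner_le _ _).trans <| by gcongr; exacts [frob_nonneg _, frob_mul_le _ _]
    _ ≤ 3 / 2 * (M * (7 / 6 * frob (Xᵀ * X - 1) * frob (Xᵀ * X - 1))) := by
        gcongr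
        · exact mul_nonneg (frob_nonneg _) (frob_nonneg _)
        · exact frob_nonneg _
    _ = 7 / 4 * M * frob (Xᵀ * X - 1) ^ 2 := by ring

/-- If `‖XᵀX - I‖_F ≤ 1/6` and `‖∇f(X)‖_F ≤ M` with `M > 0`, then
`|⟨G(X), X(XᵀX - I)⟩| ≤ (7/4)·M·‖XᵀX - I‖_F²`. -/
theorem stmt4 {n p : ℕ} (f : Matrix (Fin n) (Fin p) ℝ → ℝ)
    (hf : Differentiable ℝ f)
    (gradf : Matrix (Fin n) (Fin p) ℝ → Matrix (Fin n) (Fin p) ℝ)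
    (hgrad : ∀ X V, fderiv ℝ f X V = minner (gradf X) V)
    (X : Matrix (Fin n) (Fin p) ℝ) (hX : frob (Xᵀ * X - 1) ≤ 1 / 6)
    (M : ℝ) (hM : 0 < M) (hbound : frob (gradf X) ≤ M) :
    |minner (Gdir (gradf X) X) (X * (Xᵀ * X - 1))|
      ≤ 7 / 4 * M * frob (Xᵀ * X - 1) ^ 2 :=
  stmt4_general gradf X hX M hbound
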